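/- For all positive integers m and n, the 2-leaky forcing number and the 3-leaky forcing number of the Hopi rectangle graph HD(m,n) are equal, and both equal 2(m + n), i.e., Z_{(2)}(HD(m,n)) = Z_{(3)}(HD(m,n)) = 2(m+n). -/

import Mathlib

/-- One round of the zero forcing color change rule, where vertices in the
leak set `L` are not permitted to force. A blue vertex `u ∉ L` with exactly one
non-blue neighbor `v` turns `v` blue. -/
def zfStep {V : Type*} (G : SimpleGraph V) (L : Set V) (B : Set V) : Set V :=
  B ∪ {v | ∃ u ∈ B, u ∉ L ∧ G.Adj u v ∧ ∀ w, G.Adj u w → w ∉ B → w = v}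

/-- The set of vertices eventually colored blue starting from `B`, with leaks `L`. -/
def zfClosure {V : Type*} (G : SimpleGraph V) (L : Set V) (B : Set V) : Set V :=
  ⋃ k, (zfStep G L)^[k] B

/-- `B` is an `ℓ`-leaky forcing set: for every leak set of size at most `ℓ`,
starting with exactly `B` blue, eventually every vertex becomes blue. -/
def IsLeakyForcingSet {V : Type*} (G : SimpleGraph V) (ℓ : ℕ) (B : Set V) : Prop :=
  ∀ L : Set V, L.ncard ≤ ℓ → zfClosure G L B = Set.univ

/-- `B` is a zero forcing set (no leaks). -/
def IsZeroForcingSet {V : Type*} (G : SimpleGraph V) (B : Set V) : Prop :=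
  zfClosure G (∅ : Set V) B = Set.univ

/-- The zero forcing number `Z(G)`: minimum cardinality of a zero forcing set. -/
noncomputable def zfNumber {V : Type*} (G : SimpleGraph V) : ℕ :=
  sInf (Set.ncard '' {B : Set V | IsZeroForcingSet G B})

/-- The `ℓ`-leaky forcing number `Z_(ℓ)(G)`: minimum cardinality of an
`ℓ`-leaky forcing set. -/
noncomputable def leakyNumber {V : Type*} (G : SimpleGraph V) (ℓ : ℕ) : ℕ :=
  sInf (Set.ncard '' {B : Set V | IsLeakyForcingSet G ℓ B})

/-- The vertex set of the Hopi rectangle graph of order `(m,n)`: the set of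
integer lattice points `(i,j)` with `m-1 ≤ i+j ≤ 2n+m-1` and `|i-j| ≤ m`
(realized as a `Finset` by filtering a sufficiently large box). -/
noncomputable def HDverts (m n : ℕ) : Finset (ℤ × ℤ) :=
  (Finset.Icc (-2 : ℤ) (2*n + 2*m) ×ˢ Finset.Icc (-2 : ℤ) (2*n + 2*m)).filter
    (fun p => (m : ℤ) - 1 ≤ p.1 + p.2 ∧ p.1 + p.2 ≤ 2*n + m - 1 ∧ |p.1 - p.2| ≤ m)

/-- The Hopi rectangle graph `HD(m,n)`: vertices are the points of `HDverts m n`,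
and `(i,j)` is adjacent to `(i',j')` iff `|i - i'| + |j - j'| = 1`. -/
def HD (m n : ℕ) : SimpleGraph {p : ℤ × ℤ // p ∈ HDverts m n} where
  Adj u v := |u.val.1 - v.val.1| + |u.val.2 - v.val.2| = 1
  symm := by
    constructor
    intro u v h
    rw [abs_sub_comm v.val.1 u.val.1, abs_sub_comm v.val.2 u.val.2]
    exact h
  loopless := by constructor; intro u h; simp at h

/-!
A vertex of degree at most `ℓ` that is not initially blue stays white forever once its
neighbours are declared leaks, so every `ℓ`-leaky forcing set contains all such vertices. For
`ℓ ≥ 2` these include the `2(m + n)` vertices on the four boundary lines of `HD(m,n)`, which have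
degree two.

Conversely, start from the boundary and let `F` be the set of vertices that never turn blue. If
`F` is nonempty, it is a finite set of interior vertices, so all its lattice neighbours are
vertices of `HD(m,n)`. The lexicographic maxima of `(i + j, i)` and `(i + j, j)` and minima of
`(i + j, i)` and `(i + j, j)` over `F` each have a lattice neighbour outside `F` (to the right,
above, to the left, below) whose only neighbour in `F` is that extremal vertex. These four blue
vertices are distinct, so with at most three leaks one of them forces, a contradiction.
-/

open SimpleGraph

section LeakyForcing

variable {V : Type*} {G : SimpleGraph V} {L B S : Set V} {ℓ : ℕ}

/-- Vertices outside `F` with exactly one neighbour in `F`; `F` is a fort iff this is empty. -/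
def forcersInto (G : SimpleGraph V) (F : Set V) : Set V :=
  {u | u ∉ F ∧ ∃ v ∈ F, ∀ w ∈ F, G.Adj u w ↔ w = v}

lemma mem_forcersInto {F : Set V} {u : V} :
    u ∈ forcersInto G F ↔ u ∉ F ∧ ∃ v ∈ F, ∀ w ∈ F, G.Adj u w ↔ w = v := Iff.rfl

lemma mem_forcersInto_of_adj {F : Set V} {u v : V} (hv : v ∈ F) (huv : G.Adj u v)
    (hunique : ∀ w ∈ F, w = u ∨ G.Adj u w → w = v) : u ∈ forcersInto G F :=
  ⟨fun hu => huv.ne (hunique u hu (Or.inl rfl)), v, hv,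
    fun w hw => ⟨fun h => hunique w hw (Or.inr h), fun h => h ▸ huv⟩⟩

lemma subset_zfStep : B ⊆ zfStep G L B := Set.subset_union_left

lemma zfStep_mono : Monotone (zfStep G L) := by
  rintro B C h v (hv | ⟨u, hu, huL, huv, hunique⟩)
  · exact Or.inl (h hv)
  · exact Or.inr ⟨u, h hu, huL, huv, fun w huw hwC => hunique w huw (hwC <| h ·)⟩

lemma zfClosure_subset (hB : B ⊆ S) (hS : zfStep G L S ⊆ S) : zfClosure G L B ⊆ S := by
  refine Set.iUnion_subset fun k => ?_
  induction k with
  | zero => exact hB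
  | succ k ih => rw [Function.iterate_succ_apply']; exact (zfStep_mono ih).trans hS

lemma zfStep_zfClosure_subset [Finite V] : zfStep G L (zfClosure G L B) ⊆ zfClosure G L B := by
  let chain : ℕ →o Set V :=
    ⟨fun k => (zfStep G L)^[k] B, monotone_nat_of_le_succ fun k => by
      rw [Function.iterate_succ_apply']; exact subset_zfStep⟩
  obtain ⟨n, hn⟩ := WellFoundedGT.monotone_chain_condition chain
  have hclosure : zfClosure G L B = chain n := by
    refine (Set.iUnion_subset fun k => ?_).antisymm (Set.subset_iUnion (chain ·) n)
    rcases le_total k n with hk | hk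
    exacts [chain.monotone hk, (hn k hk).ge]
  rw [hclosure]
  calc zfStep G L (chain n) = chain (n + 1) := (Function.iterate_succ_apply' _ _ _).symm
    _ = chain n := (hn _ n.le_succ).symm
    _ ⊆ chain n := subset_rfl

lemma forcersInto_compl_zfClosure_subset [Finite V] :
    forcersInto G (zfClosure G L B)ᶜ ⊆ L := by
  rintro u ⟨hu, v, hv, hunique⟩
  by_contra huL
  refine hv (zfStep_zfClosure_subset (Or.inr ⟨u, not_not.1 hu, huL, ?_, ?_⟩))
  · exact (hunique v hv).2 rfl
  · exact fun w huw hw => (hunique w hw).1 huw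

lemma isLeakyForcingSet_of_lt_encard_forcersInto [Finite V]
    (h : ∀ F : Set V, F.Nonempty → Disjoint F B → (ℓ : ℕ∞) < (forcersInto G F).encard) :
    IsLeakyForcingSet G ℓ B := by
  intro L hL
  by_contra hne
  have hB : Disjoint (zfClosure G L B)ᶜ B :=
    Set.disjoint_compl_left_iff_subset.2 (Set.subset_iUnion (fun k => (zfStep G L)^[k] B) 0)
  have hlt := h _ (Set.nonempty_compl.2 hne) hB
  have hle :=
    Set.encard_le_encard (forcersInto_compl_zfClosure_subset (G := G) (B := B) (L := L))
  rw [← L.toFinite.cast_ncard_eq] at hle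
  exact absurd (hlt.trans_le hle) (not_lt.2 (by exact_mod_cast hL))

lemma mem_of_isLeakyForcingSet (hB : IsLeakyForcingSet G ℓ B) {v : V}
    (hv : (G.neighborSet v).ncard ≤ ℓ) : v ∈ B := by
  by_contra hvB
  have hstep : zfStep G (G.neighborSet v) {v}ᶜ ⊆ {v}ᶜ := by
    rintro w (hw | ⟨u, -, hu, huw, -⟩) rfl
    exacts [hw rfl, hu huw.symm]
  have := zfClosure_subset (Set.subset_compl_singleton_iff.2 hvB) hstep
  rw [hB _ hv] at this
  exact this (Set.mem_univ v) rfl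

lemma leakyNumber_eq_ncard [Finite V] (hS : IsLeakyForcingSet G ℓ S)
    (hdeg : ∀ v ∈ S, (G.neighborSet v).ncard ≤ ℓ) : leakyNumber G ℓ = S.ncard := by
  refine le_antisymm (Nat.sInf_le ⟨S, hS, rfl⟩) (le_csInf ⟨S.ncard, S, hS, rfl⟩ ?_)
  rintro _ ⟨B, hB, rfl⟩
  exact Set.ncard_le_ncard (fun v hv => mem_of_isLeakyForcingSet hB (hdeg v hv))

lemma forcersInto_subset_image_forcersInto_induce {s : Set V} {F : Set s}
    (hF : ∀ v ∈ F, G.neighborSet v ⊆ s) :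
    forcersInto G (Subtype.val '' F) ⊆ Subtype.val '' forcersInto (G.induce s) F := by
  rintro u ⟨hu, _, ⟨v, hv, rfl⟩, hunique⟩
  have huv : G.Adj u v := (hunique v ⟨v, hv, rfl⟩).2 rfl
  have hus : u ∈ s := hF v hv huv.symm
  refine ⟨⟨u, hus⟩, mem_forcersInto.2 ?_, rfl⟩
  refine ⟨fun h => hu ⟨_, h, rfl⟩, v, hv, fun w hw => ?_⟩
  simpa [Subtype.ext_iff] using hunique w ⟨w, hw, rfl⟩

end LeakyForcing

noncomputable abbrev squareGrid : SimpleGraph (ℤ × ℤ) := hasse ℤ □ hasse ℤ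

lemma squareGrid_adj {p q : ℤ × ℤ} :
    squareGrid.Adj p q ↔
      (q.1 = p.1 + 1 ∨ q.1 = p.1 - 1) ∧ q.2 = p.2 ∨
        q.1 = p.1 ∧ (q.2 = p.2 + 1 ∨ q.2 = p.2 - 1) := by
  simp only [boxProd_adj, hasse_adj, Order.covBy_iff_add_one_eq]
  omega

lemma four_le_encard_forcersInto_squareGrid {F : Set (ℤ × ℤ)} (hF : F.Finite)
    (hne : F.Nonempty) : 4 ≤ (forcersInto squareGrid F).encard := by
  obtain ⟨v₁, hv₁, h₁⟩ := F.exists_max_image (fun p => toLex (p.1 + p.2, p.1)) hF hne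
  obtain ⟨v₂, hv₂, h₂⟩ := F.exists_max_image (fun p => toLex (p.1 + p.2, p.2)) hF hne
  obtain ⟨v₃, hv₃, h₃⟩ := F.exists_max_image (fun p => toLex (-(p.1 + p.2), -p.1)) hF hne
  obtain ⟨v₄, hv₄, h₄⟩ := F.exists_max_image (fun p => toLex (-(p.1 + p.2), -p.2)) hF hne
  simp only [Prod.Lex.toLex_le_toLex] at h₁ h₂ h₃ h₄
  have hsub : {(v₁.1 + 1, v₁.2), (v₂.1, v₂.2 + 1), (v₃.1 - 1, v₃.2), (v₄.1, v₄.2 - 1)} ⊆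
      forcersInto squareGrid F := by
    rintro u (rfl | rfl | rfl | rfl)
    · refine mem_forcersInto_of_adj hv₁ (squareGrid_adj.2 (by omega)) fun w hw hwu => ?_
      have := h₁ w hw
      simp only [squareGrid_adj, Prod.ext_iff] at hwu ⊢; omega
    · refine mem_forcersInto_of_adj hv₂ (squareGrid_adj.2 (by omega)) fun w hw hwu => ?_
      have := h₂ w hw
      simp only [squareGrid_adj, Prod.ext_iff] at hwu ⊢; omega
    · refine mem_forcersInto_of_adj hv₃ (squareGrid_adj.2 (by omega)) fun w hw hwu => ?_
      have := h₃ w hw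
      simp only [squareGrid_adj, Prod.ext_iff] at hwu ⊢; omega
    · refine mem_forcersInto_of_adj hv₄ (squareGrid_adj.2 (by omega)) fun w hw hwu => ?_
      have := h₄ w hw
      simp only [squareGrid_adj, Prod.ext_iff] at hwu ⊢; omega
  refine le_of_eq_of_le (Set.encard_eq_four.2 ⟨_, _, _, _, ?_, ?_, ?_, ?_, ?_, ?_, rfl⟩).symm
    (Set.encard_le_encard hsub)
  all_goals
    have := h₁ v₂ hv₂; have := h₂ v₁ hv₁; have := h₃ v₄ hv₄; have := h₄ v₃ hv₃
    have := h₁ v₃ hv₃; have := h₁ v₄ hv₄; have := h₂ v₃ hv₃; have := h₂ v₄ hv₄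
    simp only [ne_eq, Prod.ext_iff]; omega

section HopiRectangle

variable {m n : ℕ}

lemma mem_HDverts {p : ℤ × ℤ} :
    p ∈ HDverts m n ↔ (m : ℤ) - 1 ≤ p.1 + p.2 ∧ p.1 + p.2 ≤ 2 * n + m - 1 ∧
      -(m : ℤ) ≤ p.1 - p.2 ∧ p.1 - p.2 ≤ m := by
  simp only [HDverts, Finset.mem_filter, Finset.mem_product, Finset.mem_Icc, abs_le]
  omega

lemma HD_eq_induce : HD m n = squareGrid.induce (HDverts m n : Set (ℤ × ℤ)) := by
  ext u v
  simp only [HD, comap_adj, Function.Embedding.subtype_apply, squareGrid_adj]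
  rcases abs_cases (u.1.1 - v.1.1) with h | h <;>
    rcases abs_cases (u.1.2 - v.1.2) with h' | h' <;> omega

def hopiBoundary (m n : ℕ) : Set {p : ℤ × ℤ // p ∈ HDverts m n} :=
  {v | v.1.1 + v.1.2 = m - 1 ∨ v.1.1 + v.1.2 = 2 * n + m - 1 ∨ v.1.1 - v.1.2 = m ∨
    v.1.2 - v.1.1 = m}

lemma neighborSet_subset_HDverts {v : {p : ℤ × ℤ // p ∈ HDverts m n}}
    (hv : v ∉ hopiBoundary m n) : squareGrid.neighborSet v.1 ⊆ HDverts m n := by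
  intro q hq
  have := mem_HDverts.1 v.2
  simp only [hopiBoundary, Set.mem_ofPred_eq] at hv
  rw [mem_neighborSet, squareGrid_adj] at hq
  rw [Finset.mem_coe, mem_HDverts]
  omega

lemma ncard_neighborSet_HD_le_two {v : {p : ℤ × ℤ // p ∈ HDverts m n}}
    (hv : v ∈ hopiBoundary m n) : ((HD m n).neighborSet v).ncard ≤ 2 := by
  obtain ⟨a, b, hab⟩ : ∃ a b : ℤ × ℤ, ∀ w ∈ (HD m n).neighborSet v, w.1 = a ∨ w.1 = b := by
    have := mem_HDverts.1 v.2
    rcases hv with h | h | h | h <;>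
      [refine ⟨(v.1.1 + 1, v.1.2), (v.1.1, v.1.2 + 1), ?_⟩;
       refine ⟨(v.1.1 - 1, v.1.2), (v.1.1, v.1.2 - 1), ?_⟩;
       refine ⟨(v.1.1 - 1, v.1.2), (v.1.1, v.1.2 + 1), ?_⟩;
       refine ⟨(v.1.1 + 1, v.1.2), (v.1.1, v.1.2 - 1), ?_⟩] <;>
    · intro w hw
      rw [HD_eq_induce, mem_neighborSet, induce_adj, squareGrid_adj] at hw
      have := mem_HDverts.1 w.2
      simp only [Prod.ext_iff]
      omega
  calc ((HD m n).neighborSet v).ncard = (Subtype.val '' (HD m n).neighborSet v).ncard :=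
        (Set.ncard_image_of_injective _ Subtype.val_injective).symm
    _ ≤ ({a, b} : Set (ℤ × ℤ)).ncard :=
        Set.ncard_le_ncard (by rintro _ ⟨w, hw, rfl⟩; exact hab w hw)
    _ ≤ ({b} : Set (ℤ × ℤ)).ncard + 1 := Set.ncard_insert_le a {b}
    _ = 2 := by rw [Set.ncard_singleton]

def hopiBoundaryParam (m n : ℕ) : ℤ ⊕ ℤ ⊕ ℤ ⊕ ℤ → ℤ × ℤ
  | .inl i => (i, m - 1 - i)
  | .inr (.inl i) => (n + i, n + m - 1 - i)
  | .inr (.inr (.inl t)) => (m + t, t)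
  | .inr (.inr (.inr t)) => (t, m + t)

lemma hopiBoundaryParam_injective (hm : 0 < m) (hn : 0 < n) :
    (hopiBoundaryParam m n).Injective := by
  rintro (i | i | i | i) (j | j | j | j) h <;>
    simp only [hopiBoundaryParam, Prod.ext_iff, Sum.inl.injEq, Sum.inr.injEq,
      reduceCtorEq] at h ⊢ <;>
    omega

lemma image_val_hopiBoundary :
    Subtype.val '' hopiBoundary m n =
      ((Finset.Icc 0 ((m : ℤ) - 1)).disjSum ((Finset.Icc 0 ((m : ℤ) - 1)).disjSum
        ((Finset.Icc 0 ((n : ℤ) - 1)).disjSum (Finset.Icc 0 ((n : ℤ) - 1))))).image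
        (hopiBoundaryParam m n) := by
  ext p
  simp only [Set.mem_image, Finset.coe_image, hopiBoundary, Set.mem_ofPred_eq]
  constructor
  · rintro ⟨⟨p, hp⟩, hb, rfl⟩
    have := mem_HDverts.1 hp
    dsimp only at hb ⊢
    rcases hb with h | h | h | h <;>
      [refine ⟨.inl p.1, ?_, ?_⟩; refine ⟨.inr (.inl (p.1 - n)), ?_, ?_⟩;
       refine ⟨.inr (.inr (.inl p.2)), ?_, ?_⟩; refine ⟨.inr (.inr (.inr p.1)), ?_, ?_⟩] <;>
      simp only [Finset.mem_coe, Finset.inl_mem_disjSum, Finset.inr_mem_disjSum, Finset.mem_Icc,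
        hopiBoundaryParam, Prod.ext_iff, true_and, and_true] <;>
      omega
  · rintro ⟨x, hx, rfl⟩
    refine ⟨⟨_, mem_HDverts.2 ?_⟩, ?_, rfl⟩ <;>
      rcases x with i | i | i | i <;>
      simp only [Finset.mem_coe, Finset.inl_mem_disjSum, Finset.inr_mem_disjSum,
        Finset.mem_Icc] at hx ⊢ <;>
      omega

lemma ncard_hopiBoundary (hm : 0 < m) (hn : 0 < n) :
    (hopiBoundary m n).ncard = 2 * (m + n) := by
  rw [← Set.ncard_image_of_injective _ Subtype.val_injective, image_val_hopiBoundary,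
    Set.ncard_coe_finset, Finset.card_image_of_injective _ (hopiBoundaryParam_injective hm hn)]
  simp only [Finset.card_disjSum, Int.card_Icc]
  omega

lemma isLeakyForcingSet_hopiBoundary {ℓ : ℕ} (hℓ : ℓ ≤ 3) :
    IsLeakyForcingSet (HD m n) ℓ (hopiBoundary m n) := by
  refine isLeakyForcingSet_of_lt_encard_forcersInto fun F hne hF => ?_
  have hinterior : ∀ v ∈ F, squareGrid.neighborSet v ⊆ (HDverts m n : Set (ℤ × ℤ)) :=
    fun v hv => neighborSet_subset_HDverts (hF.notMem_of_mem_left hv)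
  calc (ℓ : ℕ∞) < 4 := by exact_mod_cast Nat.lt_succ_of_le hℓ
    _ ≤ (forcersInto squareGrid (Subtype.val '' F)).encard :=
        four_le_encard_forcersInto_squareGrid (F.toFinite.image _) (hne.image _)
    _ ≤ (Subtype.val '' forcersInto (HD m n) F).encard := by
        rw [HD_eq_induce]
        exact Set.encard_le_encard (forcersInto_subset_image_forcersInto_induce hinterior)
    _ = (forcersInto (HD m n) F).encard := Subtype.val_injective.encard_image _

end HopiRectangle

/-- The `2`-leaky and `3`-leaky forcing numbers of `HD(m,n)` are equal, and
both equal `2(m + n)`. -/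
theorem two_three_leaky_HD (m n : ℕ) (hm : 0 < m) (hn : 0 < n) :
    leakyNumber (HD m n) 2 = 2 * (m + n) ∧
      leakyNumber (HD m n) 3 = 2 * (m + n) := by
  have hdeg (ℓ : ℕ) (hℓ : 2 ≤ ℓ) :
      ∀ v ∈ hopiBoundary m n, ((HD m n).neighborSet v).ncard ≤ ℓ :=
    fun v hv => (ncard_neighborSet_HD_le_two hv).trans hℓ
  rw [← ncard_hopiBoundary hm hn]
  exact ⟨leakyNumber_eq_ncard (isLeakyForcingSet_hopiBoundary (by norm_num)) (hdeg 2 le_rfl),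
    leakyNumber_eq_ncard (isLeakyForcingSet_hopiBoundary le_rfl) (hdeg 3 (by norm_num))⟩
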